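/- Every point a in the interior of Γ has a neighborhood U ⊂ ℝ² such that for every z ∈ K the map ã ↦ 𝔼_z[e^{ã·S(τ)}; τ < ∞] is finite on U. -/

import Mathlib

open scoped ENNReal Classical

noncomputable section

namespace KilledRW

/-- The two-dimensional integer lattice. -/
abbrev Z2 := ℤ × ℤ

/-- The plane `ℝ²`. -/
abbrev R2 := ℝ × ℝ

/-- Euclidean dot product on `ℝ²`. -/
def dotR (a b : R2) : ℝ := a.1 * b.1 + a.2 * b.2

/-- Embedding of the lattice into the plane. -/
def emb (z : Z2) : R2 := ((z.1 : ℝ), (z.2 : ℝ))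

/-- Euclidean norm on `ℝ²`. -/
def nrm (x : R2) : ℝ := Real.sqrt (dotR x x)

/-- The jump generating function `φ(a) = Σ_z γ(z) e^{a·z}`. -/
def jgf (γ : Z2 → ℝ) (a : R2) : ℝ := ∑' z : Z2, γ z * Real.exp (dotR a (emb z))

/-- The gradient `∇φ(a) = Σ_z z γ(z) e^{a·z}` of the jump generating function. -/
def gradJgf (γ : Z2 → ℝ) (a : R2) : R2 :=
  (∑' z : Z2, γ z * Real.exp (dotR a (emb z)) * (z.1 : ℝ),
   ∑' z : Z2, γ z * Real.exp (dotR a (emb z)) * (z.2 : ℝ))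

/-- The normalized gradient `q(a) = ∇φ(a)/|∇φ(a)|`. -/
def qmap (γ : Z2 → ℝ) (a : R2) : R2 := (nrm (gradJgf γ a))⁻¹ • gradJgf γ a

/-- (Sub)stochastic transition kernel of the twisted random walk `S_a`:
`p_a(z,z') = γ(z'-z) e^{a·(z'-z)}`.  For `a = 0` this is the kernel of the original walk. -/
def twKer (γ : Z2 → ℝ) (a : R2) (z z' : Z2) : ℝ≥0∞ :=
  ENNReal.ofReal (γ (z' - z) * Real.exp (dotR a (emb (z' - z))))

/-- `n`-step transition probabilities of the (sub)stochastic kernel `κ`. -/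
def nstep (κ : Z2 → Z2 → ℝ≥0∞) : ℕ → Z2 → Z2 → ℝ≥0∞
  | 0, z, z' => if z' = z then 1 else 0
  | n + 1, z, z' => ∑' w : Z2, κ z w * nstep κ n w z'

/-- `exitP κ A n z z' = ℙ_z(τ_A = n, S(n) = z')`: the probability that the walk with kernel `κ`
started at `z` stays in `A` strictly before time `n` and is at `z' ∉ A` at time `n`
(where `τ_A = inf{n ≥ 0 : S(n) ∉ A}`). -/
def exitP (κ : Z2 → Z2 → ℝ≥0∞) (A : Set Z2) : ℕ → Z2 → Z2 → ℝ≥0∞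
  | 0, z, z' => if z' = z ∧ z ∉ A then 1 else 0
  | n + 1, z, z' => if z ∈ A then ∑' w : Z2, κ z w * exitP κ A n w z' else 0

/-- `aliveP κ A n z z' = ℙ_z(τ_A > n, S(n) = z')`. -/
def aliveP (κ : Z2 → Z2 → ℝ≥0∞) (A : Set Z2) : ℕ → Z2 → Z2 → ℝ≥0∞
  | 0, z, z' => if z' = z ∧ z ∈ A then 1 else 0
  | n + 1, z, z' => if z ∈ A then ∑' w : Z2, κ z w * aliveP κ A n w z' else 0

/-- `ℙ_z(τ_A < ∞)` for the walk with kernel `κ`. -/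
def exitTotal (κ : Z2 → Z2 → ℝ≥0∞) (A : Set Z2) (z : Z2) : ℝ≥0∞ :=
  ∑' n : ℕ, ∑' z' : Z2, exitP κ A n z z'

/-- `𝔼_z[g(S(τ_A)); τ_A < ∞]` for a nonnegative integrand, with values in `ℝ≥0∞`. -/
def exitLExp (κ : Z2 → Z2 → ℝ≥0∞) (A : Set Z2) (z : Z2) (g : Z2 → ℝ) : ℝ≥0∞ :=
  ∑' n : ℕ, ∑' z' : Z2, exitP κ A n z z' * ENNReal.ofReal (g z')

/-- `𝔼_z[g(S(τ_A)); τ_A < ∞]` for a signed integrand (positive part minus negative part). -/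
def exitExp (κ : Z2 → Z2 → ℝ≥0∞) (A : Set Z2) (z : Z2) (g : Z2 → ℝ) : ℝ :=
  (exitLExp κ A z g).toReal - (exitLExp κ A z fun w => -g w).toReal

/-- `𝔼_z[g(S(τ_A)); τ_A ≤ n]`, nonnegative version. -/
def exitLExpTrunc (κ : Z2 → Z2 → ℝ≥0∞) (A : Set Z2) (z : Z2) (g : Z2 → ℝ) (n : ℕ) : ℝ≥0∞ :=
  ∑ m ∈ Finset.range (n + 1), ∑' z' : Z2, exitP κ A m z z' * ENNReal.ofReal (g z')

/-- `𝔼_z[g(S(τ_A)); τ_A ≤ n]`, signed version. -/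
def exitExpTrunc (κ : Z2 → Z2 → ℝ≥0∞) (A : Set Z2) (z : Z2) (g : Z2 → ℝ) (n : ℕ) : ℝ :=
  (exitLExpTrunc κ A z g n).toReal - (exitLExpTrunc κ A z (fun w => -g w) n).toReal

/-- `𝔼_z[g(S(n)); τ_A > n]`, nonnegative version. -/
def aliveLExpAt (κ : Z2 → Z2 → ℝ≥0∞) (A : Set Z2) (z : Z2) (g : Z2 → ℝ) (n : ℕ) : ℝ≥0∞ :=
  ∑' z' : Z2, aliveP κ A n z z' * ENNReal.ofReal (g z')

/-- `𝔼_z[g(S(n)); τ_A > n]`, signed version. -/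
def aliveExpAt (κ : Z2 → Z2 → ℝ≥0∞) (A : Set Z2) (z : Z2) (g : Z2 → ℝ) (n : ℕ) : ℝ :=
  (aliveLExpAt κ A z g n).toReal - (aliveLExpAt κ A z (fun w => -g w) n).toReal

/-!
For `φ(b) ≤ 1` the function `x ↦ e^{b·x}` is superharmonic for the walk, so by optional stopping
`𝔼_z[e^{b·S(τ)}; τ < ∞] ≤ e^{b·z}`. Since `q(a) ∈ K`, the directional derivative
`f i · ∇φ(a)` of `φ` at `a` is positive, so `φ(a - λ f i) < 1` for some small `λ > 0`, and by
continuity of the convex function `φ` also `φ(b - λ f i) < 1` for `b` near `a`. Outside `K` some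
`f i · x ≤ 0`, so there `e^{b·x} ≤ Σ i, e^{(b - λ f i)·x}`, a superharmonic function; hence
`𝔼_z[e^{b·S(τ)}; τ < ∞] ≤ Σ i, e^{(b - λ f i)·z} < ∞`.
-/

open Filter Topology

lemma dotR_add_left (x y w : R2) : dotR (x + y) w = dotR x w + dotR y w := by
  simp only [dotR, Prod.fst_add, Prod.snd_add]
  ring

lemma dotR_smul_left (c : ℝ) (x w : R2) : dotR (c • x) w = c * dotR x w := by
  simp only [dotR, Prod.smul_fst, Prod.smul_snd, smul_eq_mul]
  ring

lemma dotR_smul_right (c : ℝ) (x w : R2) : dotR x (c • w) = c * dotR x w := by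
  simp only [dotR, Prod.smul_fst, Prod.smul_snd, smul_eq_mul]
  ring

lemma dotR_sub_left (x y w : R2) : dotR (x - y) w = dotR x w - dotR y w := by
  simp only [dotR, Prod.fst_sub, Prod.snd_sub]
  ring

lemma dotR_neg_left (x w : R2) : dotR (-x) w = -dotR x w := by
  simp only [dotR, Prod.fst_neg, Prod.snd_neg]
  ring

lemma dotR_emb_add (b : R2) (u z : Z2) :
    dotR b (emb (u + z)) = dotR b (emb u) + dotR b (emb z) := by
  simp only [dotR, emb, Prod.fst_add, Prod.snd_add, Int.cast_add]
  ring

lemma abs_mul_exp_mul_le {s t : ℝ} (ht : |t| ≤ 1) :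
    |s * Real.exp (t * s)| ≤ Real.exp (2 * s) + Real.exp (-(2 * s)) := by
  have hs : |s| ≤ Real.exp |s| := by linarith [Real.add_one_le_exp |s|]
  have hts : Real.exp (t * s) ≤ Real.exp |s| := by
    gcongr
    calc t * s ≤ |t| * |s| := by rw [← abs_mul]; exact le_abs_self _
      _ ≤ |s| := mul_le_of_le_one_left (abs_nonneg s) ht
  calc |s * Real.exp (t * s)| = |s| * Real.exp (t * s) := by
        rw [abs_mul, abs_of_pos (Real.exp_pos _)]
    _ ≤ Real.exp |s| * Real.exp |s| := by gcongr
    _ = Real.exp |2 * s| := by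
        rw [← Real.exp_add, abs_mul, abs_two, two_mul]
    _ ≤ Real.exp (2 * s) + Real.exp (-(2 * s)) := Real.exp_abs_le _

section Exit

variable (κ : Z2 → Z2 → ℝ≥0∞) (A : Set Z2)

def IsSuperharmonicOn (h : Z2 → ℝ≥0∞) : Prop :=
  ∀ z ∈ A, ∑' w, κ z w * h w ≤ h z

variable {κ A}

lemma IsSuperharmonicOn.finset_sum {ι : Type*} (s : Finset ι) {h : ι → Z2 → ℝ≥0∞}
    (hh : ∀ i ∈ s, IsSuperharmonicOn κ A (h i)) :
    IsSuperharmonicOn κ A fun w => ∑ i ∈ s, h i w := by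
  intro z hz
  calc ∑' w, κ z w * ∑ i ∈ s, h i w = ∑ i ∈ s, ∑' w, κ z w * h i w := by
        simp_rw [Finset.mul_sum]
        exact Summable.tsum_finsetSum fun _ _ => ENNReal.summable
    _ ≤ ∑ i ∈ s, h i z := Finset.sum_le_sum fun i hi => hh i hi z hz

lemma exitP_eq_zero_of_mem {z' : Z2} (hz' : z' ∈ A) (n : ℕ) (z : Z2) :
    exitP κ A n z z' = 0 := by
  induction n generalizing z with
  | zero =>
    simp only [exitP, ite_eq_right_iff, one_ne_zero, imp_false, not_and, not_not]
    rintro rfl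
    exact hz'
  | succ n ih => simp [exitP, ih]

lemma sum_range_tsum_exitP_mul_le {h : Z2 → ℝ≥0∞} (hh : IsSuperharmonicOn κ A h) (n : ℕ)
    (z : Z2) : ∑ m ∈ Finset.range n, ∑' z', exitP κ A m z z' * h z' ≤ h z := by
  induction n generalizing z with
  | zero => simp
  | succ n ih =>
    rw [Finset.sum_range_succ']
    by_cases hz : z ∈ A
    · have hstep : ∀ m, ∑' z', exitP κ A (m + 1) z z' * h z'
          = ∑' w, κ z w * ∑' z', exitP κ A m w z' * h z' := by
        intro m
        simp only [exitP, if_pos hz, ← ENNReal.tsum_mul_right, ← ENNReal.tsum_mul_left, mul_assoc]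
        exact ENNReal.tsum_comm
      calc ∑ m ∈ Finset.range n, ∑' z', exitP κ A (m + 1) z z' * h z'
            + ∑' z', exitP κ A 0 z z' * h z'
          = ∑' w, κ z w * ∑ m ∈ Finset.range n, ∑' z', exitP κ A m w z' * h z' := by
            simp_rw [hstep, Finset.mul_sum]
            simp [exitP, hz, Summable.tsum_finsetSum fun _ _ => ENNReal.summable]
        _ ≤ ∑' w, κ z w * h w := by gcongr with w; exact ih w
        _ ≤ h z := hh z hz
    · simp [exitP, hz]

lemma exitLExp_le_of_isSuperharmonicOn {h : Z2 → ℝ≥0∞} (hh : IsSuperharmonicOn κ A h)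
    {g : Z2 → ℝ} (hgh : ∀ z' ∉ A, ENNReal.ofReal (g z') ≤ h z') (z : Z2) :
    exitLExp κ A z g ≤ h z := by
  calc exitLExp κ A z g ≤ ∑' n, ∑' z', exitP κ A n z z' * h z' := by
        refine ENNReal.tsum_le_tsum fun n => ENNReal.tsum_le_tsum fun z' => ?_
        by_cases hz' : z' ∈ A
        · simp [exitP_eq_zero_of_mem hz']
        · gcongr
          exact hgh z' hz'
    _ ≤ h z := ENNReal.tsum_le_of_sum_range_le fun n => sum_range_tsum_exitP_mul_le hh n z

end Exit

section Jgf

variable {γ : Z2 → ℝ}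

lemma tsum_twKer_zero_mul_exp (hγ0 : ∀ z, 0 ≤ γ z)
    (hA3 : ∀ a : R2, Summable fun z : Z2 => γ z * Real.exp (dotR a (emb z))) (b : R2) (z : Z2) :
    ∑' w, twKer γ 0 z w * ENNReal.ofReal (Real.exp (dotR b (emb w)))
      = ENNReal.ofReal (jgf γ b * Real.exp (dotR b (emb z))) := by
  have hterm : ∀ u, twKer γ 0 z (u + z) * ENNReal.ofReal (Real.exp (dotR b (emb (u + z))))
      = ENNReal.ofReal (γ u * Real.exp (dotR b (emb u)) * Real.exp (dotR b (emb z))) := by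
    intro u
    simp only [twKer, add_sub_cancel_right, dotR_emb_add, Real.exp_add, mul_assoc]
    rw [← ENNReal.ofReal_mul (mul_nonneg (hγ0 u) (Real.exp_nonneg _))]
    simp [dotR]
  rw [← (Equiv.addRight z).tsum_eq, jgf, ← tsum_mul_right]
  simp only [Equiv.coe_addRight, hterm]
  exact (ENNReal.ofReal_tsum_of_nonneg
    (fun u => by have := hγ0 u; positivity) ((hA3 b).mul_right _)).symm

lemma isSuperharmonicOn_exp (hγ0 : ∀ z, 0 ≤ γ z)
    (hA3 : ∀ a : R2, Summable fun z : Z2 => γ z * Real.exp (dotR a (emb z)))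
    {b : R2} (hb : jgf γ b ≤ 1) (A : Set Z2) :
    IsSuperharmonicOn (twKer γ 0) A fun w => ENNReal.ofReal (Real.exp (dotR b (emb w))) := by
  intro z _
  rw [tsum_twKer_zero_mul_exp hγ0 hA3]
  exact ENNReal.ofReal_le_ofReal (mul_le_of_le_one_left (Real.exp_nonneg _) hb)

lemma jgf_convexOn (hγ0 : ∀ z, 0 ≤ γ z)
    (hA3 : ∀ a : R2, Summable fun z : Z2 => γ z * Real.exp (dotR a (emb z))) :
    ConvexOn ℝ Set.univ (jgf γ) := by
  refine ⟨convex_univ, fun x _ y _ p q hp hq hpq => ?_⟩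
  have hterm : ∀ z, γ z * Real.exp (dotR (p • x + q • y) (emb z))
      ≤ p * (γ z * Real.exp (dotR x (emb z))) + q * (γ z * Real.exp (dotR y (emb z))) := by
    intro z
    have hexp := convexOn_exp.2 (Set.mem_univ (dotR x (emb z))) (Set.mem_univ (dotR y (emb z)))
      hp hq hpq
    simp only [smul_eq_mul] at hexp
    rw [dotR_add_left, dotR_smul_left, dotR_smul_left]
    nlinarith [hγ0 z]
  calc jgf γ (p • x + q • y)
      ≤ ∑' z, (p * (γ z * Real.exp (dotR x (emb z))) + q * (γ z * Real.exp (dotR y (emb z)))) :=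
        Summable.tsum_le_tsum hterm (hA3 _) (((hA3 x).mul_left p).add ((hA3 y).mul_left q))
    _ = p • jgf γ x + q • jgf γ y := by
        rw [Summable.tsum_add ((hA3 x).mul_left p) ((hA3 y).mul_left q), tsum_mul_left,
          tsum_mul_left]
        rfl

lemma jgf_continuous (hγ0 : ∀ z, 0 ≤ γ z)
    (hA3 : ∀ a : R2, Summable fun z : Z2 => γ z * Real.exp (dotR a (emb z))) :
    Continuous (jgf γ) :=
  continuousOn_univ.1 ((jgf_convexOn hγ0 hA3).continuousOn isOpen_univ)

lemma abs_jgf_term_deriv_le (hγ0 : ∀ z, 0 ≤ γ z) (a v : R2) (z : Z2) {t : ℝ} (ht : |t| ≤ 1) :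
    |γ z * Real.exp (dotR (a + t • v) (emb z)) * dotR v (emb z)|
      ≤ γ z * Real.exp (dotR (a + (2 : ℝ) • v) (emb z))
        + γ z * Real.exp (dotR (a - (2 : ℝ) • v) (emb z)) := by
  set s := dotR v (emb z)
  have hT : 0 ≤ γ z * Real.exp (dotR a (emb z)) := mul_nonneg (hγ0 z) (Real.exp_nonneg _)
  have hsplit : γ z * Real.exp (dotR (a + t • v) (emb z)) * s
      = γ z * Real.exp (dotR a (emb z)) * (s * Real.exp (t * s)) := by
    rw [dotR_add_left, dotR_smul_left, Real.exp_add]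
    ring
  calc |γ z * Real.exp (dotR (a + t • v) (emb z)) * s|
      = γ z * Real.exp (dotR a (emb z)) * |s * Real.exp (t * s)| := by
        rw [hsplit, abs_mul, abs_of_nonneg hT]
    _ ≤ γ z * Real.exp (dotR a (emb z)) * (Real.exp (2 * s) + Real.exp (-(2 * s))) := by
        gcongr
        exact abs_mul_exp_mul_le ht
    _ = _ := by
        rw [dotR_add_left, dotR_sub_left, dotR_smul_left, Real.exp_add, Real.exp_sub, Real.exp_neg]
        ring

lemma summable_jgf_term_mul_dotR (hγ0 : ∀ z, 0 ≤ γ z)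
    (hA3 : ∀ a : R2, Summable fun z : Z2 => γ z * Real.exp (dotR a (emb z))) (a v : R2) :
    Summable fun z => γ z * Real.exp (dotR a (emb z)) * dotR v (emb z) :=
  Summable.of_norm_bounded ((hA3 _).add (hA3 _)) fun z => by
    simpa using abs_jgf_term_deriv_le hγ0 a v z (t := 0) (by simp)

lemma dotR_gradJgf (hγ0 : ∀ z, 0 ≤ γ z)
    (hA3 : ∀ a : R2, Summable fun z : Z2 => γ z * Real.exp (dotR a (emb z))) (a v : R2) :
    dotR v (gradJgf γ a) = ∑' z, γ z * Real.exp (dotR a (emb z)) * dotR v (emb z) := by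
  have h1 : Summable fun z : Z2 => γ z * Real.exp (dotR a (emb z)) * (z.1 : ℝ) := by
    convert summable_jgf_term_mul_dotR hγ0 hA3 a (1, 0) using 2 with z
    simp [dotR, emb]
  have h2 : Summable fun z : Z2 => γ z * Real.exp (dotR a (emb z)) * (z.2 : ℝ) := by
    convert summable_jgf_term_mul_dotR hγ0 hA3 a (0, 1) using 2 with z
    simp [dotR, emb]
  rw [dotR, gradJgf, ← tsum_mul_left, ← tsum_mul_left, ← (h1.mul_left _).tsum_add (h2.mul_left _)]
  congr 1 with z
  simp only [dotR, emb]
  ring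

lemma hasDerivAt_jgf_add_smul (hγ0 : ∀ z, 0 ≤ γ z)
    (hA3 : ∀ a : R2, Summable fun z : Z2 => γ z * Real.exp (dotR a (emb z))) (a v : R2) :
    HasDerivAt (fun t : ℝ => jgf γ (a + t • v)) (dotR v (gradJgf γ a)) 0 := by
  have hterm : ∀ z (t : ℝ), HasDerivAt (fun t : ℝ => γ z * Real.exp (dotR (a + t • v) (emb z)))
      (γ z * Real.exp (dotR (a + t • v) (emb z)) * dotR v (emb z)) t := by
    intro z t
    simp only [dotR_add_left, dotR_smul_left]
    refine ((((hasDerivAt_id' t).mul_const (dotR v (emb z))).const_add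
      (dotR a (emb z))).exp.const_mul (γ z)).congr_deriv ?_
    ring
  have h0 : (0 : ℝ) ∈ Set.Ioo (-1) 1 := by norm_num
  have hsum := hasDerivAt_tsum_of_isPreconnected ((hA3 _).add (hA3 _)) isOpen_Ioo
    isPreconnected_Ioo (fun z t _ => hterm z t)
    (fun z t ht => abs_jgf_term_deriv_le hγ0 a v z (abs_le.2 ⟨ht.1.le, ht.2.le⟩))
    h0 (by simpa using hA3 a) h0
  rw [dotR_gradJgf hγ0 hA3]
  simp only [zero_smul, add_zero] at hsum
  exact hsum

lemma eventually_jgf_sub_smul_lt (hγ0 : ∀ z, 0 ≤ γ z)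
    (hA3 : ∀ a : R2, Summable fun z : Z2 => γ z * Real.exp (dotR a (emb z))) {a v : R2}
    (hv : 0 < dotR v (gradJgf γ a)) : ∀ᶠ t in 𝓝[>] (0 : ℝ), jgf γ (a - t • v) < jgf γ a := by
  have hslope := (hasDerivAt_jgf_add_smul hγ0 hA3 a (-v)).tendsto_slope_zero_right
  rw [dotR_neg_left] at hslope
  filter_upwards [hslope.eventually (gt_mem_nhds (neg_lt_zero.2 hv)), self_mem_nhdsWithin]
    with t hneg ht
  simp only [zero_add, zero_smul, smul_neg, ← sub_eq_add_neg, sub_zero, smul_eq_mul] at hneg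
  exact sub_neg.1 (neg_of_mul_neg_right hneg (inv_nonneg.2 (le_of_lt ht)))

lemma dotR_gradJgf_pos_of_dotR_qmap_pos {a w : R2} (h : 0 < dotR w (qmap γ a)) :
    0 < dotR w (gradJgf γ a) := by
  rw [qmap, dotR_smul_right] at h
  exact pos_of_mul_pos_right h (inv_nonneg.2 (Real.sqrt_nonneg _))

end Jgf

theorem exists_nhd_finite_exit_exp_general
    (γ : Z2 → ℝ) (f : Fin 2 → R2) (K : Set R2)
    -- `γ` is a probability distribution on `ℤ²`
    (hγ0 : ∀ z : Z2, 0 ≤ γ z)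
    -- `K` is the open convex cone bounded by the rays through `c 0` and `c 1`
    (hK : K = {x : R2 | ∀ i, 0 < dotR (f i) x})
    -- (A3) the jump generating function is finite everywhere
    (hA3 : ∀ a : R2, Summable fun z : Z2 => γ z * Real.exp (dotR a (emb z)))
    -- `a` in the interior of `Γ`
    (a : R2) (haD : jgf γ a = 1) (haq : qmap γ a ∈ K) :
    ∃ U : Set R2, U ∈ nhds a ∧ ∀ b ∈ U, ∀ z : Z2, emb z ∈ K →
      exitLExp (twKer γ 0) (emb ⁻¹' K) z (fun z' => Real.exp (dotR b (emb z'))) ≠ ⊤ := by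
  rw [hK] at haq
  obtain ⟨lam, hlam, hlam0⟩ : ∃ lam : ℝ, (∀ i, jgf γ (a - lam • f i) < 1) ∧ 0 < lam := by
    rw [← haD]
    exact ((eventually_all.2 fun i => eventually_jgf_sub_smul_lt hγ0 hA3
      (dotR_gradJgf_pos_of_dotR_qmap_pos (haq i))).and self_mem_nhdsWithin).exists
  refine ⟨{b | ∀ i, jgf γ (b - lam • f i) < 1}, ?_, fun b hb z _ => ?_⟩
  · refine IsOpen.mem_nhds ?_ hlam
    simp only [Set.ofPred_forall]
    exact isOpen_iInter_of_finite fun i => isOpen_lt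
      ((jgf_continuous hγ0 hA3).comp (continuous_id.sub continuous_const)) continuous_const
  set h : Z2 → ℝ≥0∞ := fun w => ∑ i, ENNReal.ofReal (Real.exp (dotR (b - lam • f i) (emb w)))
  have hsuper : IsSuperharmonicOn (twKer γ 0) (emb ⁻¹' K) h := IsSuperharmonicOn.finset_sum _
    fun i _ => isSuperharmonicOn_exp hγ0 hA3 (hb i).le _
  have hdom : ∀ z' ∉ emb ⁻¹' K, ENNReal.ofReal (Real.exp (dotR b (emb z'))) ≤ h z' := by
    intro z' hz'
    obtain ⟨i, hi⟩ : ∃ i, dotR (f i) (emb z') ≤ 0 := by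
      simpa only [hK, Set.mem_preimage, Set.mem_ofPred_eq, not_forall, not_lt] using hz'
    refine le_trans ?_ (Finset.single_le_sum (fun _ _ => zero_le) (Finset.mem_univ i))
    gcongr
    rw [dotR_sub_left, dotR_smul_left]
    nlinarith
  exact ne_top_of_le_ne_top (by simp [h]) (exitLExp_le_of_isSuperharmonicOn hsuper hdom z)

/-- **Lemma 2.** Every point `a` in the interior of `Γ` (i.e. `a ∈ ∂D` with
`q(a)` in the interior of `Σ`, equivalently `q(a) ∈ K`) has a neighborhood `U` such that
for every `z ∈ K` the map `ã ↦ 𝔼_z[e^{ã·S(τ)}; τ < ∞]` is finite on `U`. -/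
theorem exists_nhd_finite_exit_exp
    (γ : Z2 → ℝ) (c f : Fin 2 → R2) (K : Set R2)
    -- `γ` is a probability distribution on `ℤ²`
    (hγ0 : ∀ z : Z2, 0 ≤ γ z) (hγ1 : HasSum γ 1)
    -- `c 0, c 1` are unit vectors, `f i` is the unit vector perpendicular to `c i`
    -- pointing into the cone; the angle between `c 0` and `c 1` lies in `(0, π)`
    (hcUnit : ∀ i, nrm (c i) = 1) (hfUnit : ∀ i, nrm (f i) = 1)
    (hperp : ∀ i, dotR (f i) (c i) = 0)
    (hinward : ∀ i j, i ≠ j → 0 < dotR (f i) (c j))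
    -- `K` is the open convex cone bounded by the rays through `c 0` and `c 1`
    (hK : K = {x : R2 | ∀ i, 0 < dotR (f i) x})
    -- (A1) the walk is irreducible with nonzero mean
    (hA1 : ∀ z z' : Z2, ∃ n : ℕ, 0 < nstep (twKer γ 0) n z z')
    (hmean : (∑' z : Z2, γ z * (z.1 : ℝ), ∑' z : Z2, γ z * (z.2 : ℝ)) ≠ (0, 0))
    -- (A2) the walk killed when leaving `K` is irreducible in `K`
    (hA2 : ∀ z z' : Z2, emb z ∈ K → emb z' ∈ K →
        ∃ n : ℕ, 0 < aliveP (twKer γ 0) (emb ⁻¹' K) n z z')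
    -- (A3) the jump generating function is finite everywhere
    (hA3 : ∀ a : R2, Summable fun z : Z2 => γ z * Real.exp (dotR a (emb z)))
    -- (A4) the projections `fᵢ·S(n)` are aperiodic random walks
    (hA4 : ∀ i : Fin 2, ∀ d : ℕ,
        (∀ n : ℕ, 0 < n →
          0 < ∑' z : Z2, (if dotR (f i) (emb z) = 0 then nstep (twKer γ 0) n 0 z else 0) →
          d ∣ n) → d = 1)
    -- `a` in the interior of `Γ`
    (a : R2) (haD : jgf γ a = 1) (haq : qmap γ a ∈ K) :
    ∃ U : Set R2, U ∈ nhds a ∧ ∀ b ∈ U, ∀ z : Z2, emb z ∈ K →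
      exitLExp (twKer γ 0) (emb ⁻¹' K) z (fun z' => Real.exp (dotR b (emb z'))) ≠ ⊤ :=
  exists_nhd_finite_exit_exp_general γ f K hγ0 hK hA3 a haD haq

end KilledRW
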